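/- For all extended-real failure times A, B, C: A Δ (B·C) = (A Δ B)·(C ⊴ B) + (A Δ C)·(B ⊴ C). -/

import Mathlib

noncomputable def dAND (A B : EReal) : EReal := max A B
noncomputable def dOR (A B : EReal) : EReal := min A B
noncomputable def dBEFORE (A B : EReal) : EReal := if A < B then A else ⊤
noncomputable def dIBEFORE (A B : EReal) : EReal := if A ≤ B then A else ⊤
noncomputable def dSIMULT (A B : EReal) : EReal := if A = B then A else ⊤
noncomputable def NEVER : EReal := ⊤

/-! Split on the order of `B` and `C`. If `B < C`, then `C ⊴ B = ∞` kills the first summand, while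
`B ⊴ C = B` is absorbed by `A Δ C`, which is either `C ≥ B` or `∞`; the case `C < B` is symmetric,
and for `B = C` both summands reduce to `A Δ B`. -/

theorem dAND_self (A : EReal) : dAND A A = A := max_self A

theorem dOR_top_left (A : EReal) : dOR ⊤ A = A := min_eq_right le_top

theorem dOR_top_right (A : EReal) : dOR A ⊤ = A := min_eq_left le_top

theorem dOR_self (A : EReal) : dOR A A = A := min_self A

theorem dAND_of_le {B C : EReal} (h : B ≤ C) : dAND B C = C := max_eq_right h

theorem dAND_of_ge {B C : EReal} (h : C ≤ B) : dAND B C = B := max_eq_left h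

theorem le_dSIMULT (A C : EReal) : C ≤ dSIMULT A C := by
  unfold dSIMULT
  split_ifs with h
  · exact h.ge
  · exact le_top

theorem dIBEFORE_of_le {B C : EReal} (h : B ≤ C) : dIBEFORE B C = B := if_pos h

theorem dIBEFORE_of_lt {B C : EReal} (h : C < B) : dIBEFORE B C = ⊤ := if_neg h.not_ge

theorem dAND_dSIMULT_dIBEFORE_of_le (A : EReal) {B C : EReal} (h : B ≤ C) :
    dAND (dSIMULT A C) (dIBEFORE B C) = dSIMULT A C := by
  rw [dIBEFORE_of_le h]
  exact dAND_of_ge (h.trans (le_dSIMULT A C))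

theorem dAND_dIBEFORE_of_lt (X : EReal) {B C : EReal} (h : C < B) : dAND X (dIBEFORE B C) = ⊤ := by
  rw [dIBEFORE_of_lt h]
  exact dAND_of_le le_top

theorem simult_and (A B C : EReal) :
    dSIMULT A (dAND B C) =
      dOR (dAND (dSIMULT A B) (dIBEFORE C B)) (dAND (dSIMULT A C) (dIBEFORE B C)) := by
  rcases lt_trichotomy B C with h | rfl | h
  · rw [dAND_of_le h.le, dAND_dIBEFORE_of_lt _ h, dAND_dSIMULT_dIBEFORE_of_le A h.le,
      dOR_top_left]
  · rw [dAND_self, dAND_dSIMULT_dIBEFORE_of_le A le_rfl, dOR_self]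
  · rw [dAND_of_ge h.le, dAND_dIBEFORE_of_lt _ h, dAND_dSIMULT_dIBEFORE_of_le A h.le,
      dOR_top_right]
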